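/- arXiv:math/0701561 — 4 statements merged into one kernel-verified Lean document; each statement's English description precedes it below -/
import Mathlib

section
/- Let F be a field of characteristic 0, n ≥ 1, and let J_n be the n×n Jordan block with eigenvalue 0. For every k with 1 ≤ k ≤ n, the nilpotent matrix J_n^k has shape λ^(n,k); explicitly, writing n = qk + r with 0 ≤ r < k, the shape of J_n^k consists of r parts equal to q + 1 and k − r parts equal to q. -/
/-- A nilpotent `n × n` matrix `A` has shape (Jordan type) given by the multiset of parts `μ`
(a partition of `n` with positive parts) if for every `k ≥ 0` the dimension of the kernel of
`A ^ k` equals `Σ_j min (μ_j, k)`. -/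
def hasShape {n : ℕ} {F : Type*} [Field F] (A : Matrix (Fin n) (Fin n) F)
    (μ : Multiset ℕ) : Prop :=
  (∀ i ∈ μ, 0 < i) ∧ μ.sum = n ∧
    ∀ k : ℕ, Module.finrank F (LinearMap.ker ((A ^ k).mulVecLin)) =
      (μ.map (fun m => min m k)).sum

/-- The `m × m` Jordan block with eigenvalue `0`. -/
def jordanBlock (m : ℕ) (F : Type*) [Field F] : Matrix (Fin m) (Fin m) F :=
  Matrix.of fun i j => if (i : ℕ) + 1 = (j : ℕ) then 1 else 0

lemma jordan_mulVec {F : Type*} [Field F] {n : ℕ} (y : Fin n → F) (i : Fin n) :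
    (jordanBlock n F).mulVec y i = if h : (i : ℕ) + 1 < n then y ⟨(i : ℕ) + 1, h⟩ else 0 := by
  unfold jordanBlock
  simp only [Matrix.mulVec, dotProduct, Matrix.of_apply, ite_mul, one_mul, zero_mul]
  split_ifs with h
  · rw [Finset.sum_eq_single (⟨(i : ℕ) + 1, h⟩ : Fin n)]
    · simp
    · intro b _ hb
      rw [if_neg]
      intro hc
      exact hb (Fin.ext hc.symm)
    · simp
  · apply Finset.sum_eq_zero
    intro b _
    rw [if_neg]
    intro hc
    exact h (hc ▸ b.isLt)

lemma jordan_pow_mulVec {F : Type*} [Field F] {n : ℕ} (j : ℕ) (x : Fin n → F) (i : Fin n) :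
    ((jordanBlock n F ^ j).mulVec x) i
      = if h : (i : ℕ) + j < n then x ⟨(i : ℕ) + j, h⟩ else 0 := by
  induction j generalizing x i with
  | zero => simp [Matrix.one_mulVec]
  | succ j ih =>
    rw [pow_succ', ← Matrix.mulVec_mulVec, jordan_mulVec]
    by_cases h1 : (i : ℕ) + 1 < n
    · rw [dif_pos h1, ih]
      simp only [Fin.val_mk]
      by_cases h2 : (i : ℕ) + 1 + j < n
      · rw [dif_pos h2, dif_pos (show (i : ℕ) + (j + 1) < n by omega)]
        congr 1
        exact Fin.ext (by simp only [Fin.val_mk]; omega)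
      · rw [dif_neg h2, dif_neg (show ¬ ((i : ℕ) + (j + 1) < n) by omega)]
    · rw [dif_neg h1, dif_neg (show ¬ ((i : ℕ) + (j + 1) < n) by omega)]

lemma card_subtype_ge {n j : ℕ} : Fintype.card {i : Fin n // j ≤ (i : ℕ)} = n - j := by
  have e : {i : Fin n // j ≤ (i : ℕ)} ≃ Fin (n - j) :=
    { toFun := fun s => ⟨((s.1 : Fin n) : ℕ) - j, by have := s.1.isLt; have := s.2; omega⟩
      invFun := fun m => ⟨⟨(m : ℕ) + j, by have := m.isLt; omega⟩, by simp⟩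
      left_inv := fun s => by
        have h1 := s.2
        apply Subtype.ext
        apply Fin.ext
        simp only [Fin.val_mk]
        omega
      right_inv := fun m => by
        apply Fin.ext
        simp only [Fin.val_mk]
        omega }
  rw [Fintype.card_congr e, Fintype.card_fin]

lemma finrank_ker_jordan_pow {F : Type*} [Field F] {n : ℕ} (j : ℕ) :
    Module.finrank F (LinearMap.ker ((jordanBlock n F ^ j).mulVecLin)) = min j n := by
  classical
  set f : {i : Fin n // j ≤ (i : ℕ)} → Fin n := fun s => (s : Fin n) with hf
  have hker : LinearMap.ker ((jordanBlock n F ^ j).mulVecLin)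
      = LinearMap.ker (LinearMap.funLeft F F f) := by
    ext x
    simp only [LinearMap.mem_ker, Matrix.mulVecLin_apply, LinearMap.funLeft_apply]
    constructor
    · intro hx
      funext s
      obtain ⟨⟨m, hm⟩, hjm⟩ := s
      have hx' := congrFun hx ⟨m - j, by omega⟩
      rw [jordan_pow_mulVec] at hx'
      simp only [Pi.zero_apply, Fin.val_mk] at hx'
      rw [dif_pos (show m - j + j < n by omega)] at hx'
      simp only [Nat.sub_add_cancel hjm] at hx'
      exact hx'
    · intro hx
      funext i
      rw [jordan_pow_mulVec]
      split_ifs with h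
      · exact congrFun hx ⟨⟨(i : ℕ) + j, h⟩, Nat.le_add_left _ _⟩
      · rfl
  rw [hker]
  have hinj : Function.Injective f := fun a b hab => Subtype.ext hab
  have hsurj : Function.Surjective (LinearMap.funLeft F F f) :=
    LinearMap.funLeft_surjective_of_injective F F f hinj
  have hrn := LinearMap.finrank_range_add_finrank_ker (LinearMap.funLeft F F f)
  rw [LinearMap.range_eq_top.mpr hsurj, finrank_top] at hrn
  have h1 : Module.finrank F ({i : Fin n // j ≤ (i : ℕ)} → F) = n - j := by
    rw [Module.finrank_fintype_fun_eq_card, card_subtype_ge]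
  have h2 : Module.finrank F (Fin n → F) = n := by
    rw [Module.finrank_fintype_fun_eq_card, Fintype.card_fin]
  rw [h1, h2] at hrn
  omega

/-- For `1 ≤ k ≤ n`, the `k`-th power of the `n × n` Jordan block `J_n` has shape
`λ^(n,k) = ((q+1)^r, q^(k-r))` where `n = q k + r`, `0 ≤ r < k`. -/
theorem stmt_1 {F : Type*} [Field F] [CharZero F] {n k : ℕ} (hk : 1 ≤ k) (hkn : k ≤ n) :
    hasShape ((jordanBlock n F) ^ k)
      (Multiset.replicate (n % k) (n / k + 1) + Multiset.replicate (k - n % k) (n / k)) := by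
  set q := n / k with hq
  set r := n % k with hr
  have hqr : k * q + r = n := Nat.div_add_mod n k
  have hrk : r < k := Nat.mod_lt n hk
  have hq1 : 1 ≤ q := (Nat.one_le_div_iff hk).mpr hkn
  refine ⟨?_, ?_, ?_⟩
  · intro i hi
    rcases Multiset.mem_add.mp hi with h | h
    · rw [Multiset.eq_of_mem_replicate h]; omega
    · rw [Multiset.eq_of_mem_replicate h]; omega
  · rw [Multiset.sum_add, Multiset.sum_replicate, Multiset.sum_replicate, smul_eq_mul,
      smul_eq_mul]
    have h1 : r * (q + 1) = r * q + r := by ring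
    have h2 : (k - r) * q = k * q - r * q := Nat.sub_mul k r q
    have h3 : r * q ≤ k * q := Nat.mul_le_mul_right q (le_of_lt hrk)
    omega
  · intro m
    rw [← pow_mul, finrank_ker_jordan_pow, Multiset.map_add, Multiset.sum_add,
      Multiset.map_replicate, Multiset.map_replicate, Multiset.sum_replicate,
      Multiset.sum_replicate, smul_eq_mul, smul_eq_mul]
    rcases le_or_gt m q with hm | hm
    · have h1 : min (q + 1) m = m := by omega
      have h2 : min q m = m := by omega
      have h3' : k * m ≤ k * q := Nat.mul_le_mul_left k hm
      have h3 : k * m ≤ n := by omega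
      rw [h1, h2, min_eq_left h3]
      have h4 : (k - r) * m = k * m - r * m := Nat.sub_mul k r m
      have h5 : r * m ≤ k * m := Nat.mul_le_mul_right m (le_of_lt hrk)
      omega
    · have h1 : min (q + 1) m = q + 1 := by omega
      have h2 : min q m = q := by omega
      have h3' : k * (q + 1) ≤ k * m := Nat.mul_le_mul_left k hm
      have h3'' : k * (q + 1) = k * q + k := by ring
      have h3 : n ≤ k * m := by omega
      rw [h1, h2, min_eq_right h3]
      have h4 : r * (q + 1) = r * q + r := by ring
      have h5 : (k - r) * q = k * q - r * q := Nat.sub_mul k r q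
      have h6 : r * q ≤ k * q := Nat.mul_le_mul_right q (le_of_lt hrk)
      omega
end

section
/- Let Γ be a finite acyclic digraph on vertex set {1,…,n} with edge set E, let K be the fraction field of the polynomial ring over ℚ in independent variables x_e indexed by the edges e ∈ E, and let M_Γ be the n×n matrix over K whose (i,j) entry is x_{(i,j)} if (i,j) ∈ E and 0 otherwise. Then M_Γ is nilpotent and its index of nilpotency equals the maximum number of vertices on a directed path in Γ. -/
/-!
Only walks contribute to powers of a matrix: a nonzero entry of `M ^ k` yields a walk with
`k` edges in the support of `M`. Conversely, specialising every variable to `1` sends `M_Γ` to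
the adjacency matrix over `ℕ`, where nothing cancels, so a walk with `k` edges keeps `M_Γ ^ k`
away from `0`. Hence `M_Γ ^ k = 0` iff every walk has at most `k` vertices, and in an acyclic
digraph every walk is a path.
-/

/-- A directed path in the digraph on `Fin n` with edge set `E`: a nonempty list of distinct
vertices in which consecutive vertices are joined by directed edges. -/
def IsPath {n : ℕ} (E : Finset (Fin n × Fin n)) (p : List (Fin n)) : Prop :=
  p ≠ [] ∧ p.Nodup ∧ p.Chain' (fun a b => (a, b) ∈ E)

/-- The digraph on `Fin n` with edge set `E` is acyclic: no vertex reaches itself through a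
nonempty sequence of directed edges. -/
def IsAcyclicDigraph {n : ℕ} (E : Finset (Fin n × Fin n)) : Prop :=
  ∀ v : Fin n, ¬ Relation.TransGen (fun a b => (a, b) ∈ E) v v

/-- The maximum number of vertices on a directed path in the digraph `(Fin n, E)`. -/
noncomputable def longestPath {n : ℕ} (E : Finset (Fin n × Fin n)) : ℕ :=
  sSup {m | ∃ p : List (Fin n), IsPath E p ∧ m = p.length}

/-- The generic matrix of the digraph `(Fin n, E)`: the `(i,j)` entry is the transcendental
`x_{(i,j)}` if `(i,j) ∈ E`, and `0` otherwise, over the fraction field of the polynomial ring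
over `ℚ` in independent variables indexed by the edges. -/
noncomputable def genericMatrix (n : ℕ) (E : Finset (Fin n × Fin n)) :
    Matrix (Fin n) (Fin n) (FractionRing (MvPolynomial {e : Fin n × Fin n // e ∈ E} ℚ)) :=
  Matrix.of fun i j =>
    if h : (i, j) ∈ E then
      algebraMap (MvPolynomial {e : Fin n × Fin n // e ∈ E} ℚ) _ (MvPolynomial.X ⟨(i, j), h⟩)
    else 0

namespace Matrix

variable {α R : Type*} [Fintype α] [DecidableEq α] [Semiring R]

theorem exists_isChain_of_pow_apply_ne_zero (A : Matrix α α R) {k : ℕ} {i j : α}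
    (h : (A ^ k) i j ≠ 0) :
    ∃ p : List α, p.length = k ∧ (i :: p).IsChain (fun a b => A a b ≠ 0) := by
  induction k generalizing i with
  | zero => exact ⟨[], rfl, .singleton i⟩
  | succ k ih =>
    rw [pow_succ', mul_apply] at h
    obtain ⟨l, -, hl⟩ := Finset.exists_ne_zero_of_sum_ne_zero h
    obtain ⟨p, hp, hchain⟩ := ih (right_ne_zero_of_mul hl)
    exact ⟨l :: p, by simp [hp],
      List.isChain_cons_cons.mpr ⟨left_ne_zero_of_mul hl, hchain⟩⟩

theorem exists_isChain_of_pow_ne_zero (A : Matrix α α R) {k : ℕ} (h : A ^ k ≠ 0) :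
    ∃ p : List α, p.length = k + 1 ∧ p.IsChain (fun a b => A a b ≠ 0) := by
  obtain ⟨i, j, hij⟩ : ∃ i j, (A ^ k) i j ≠ 0 := by
    by_contra! h'
    exact h (ext h')
  obtain ⟨p, hp, hchain⟩ := A.exists_isChain_of_pow_apply_ne_zero hij
  exact ⟨i :: p, by simp [hp], hchain⟩

theorem map_pow_eq_zero_iff {S : Type*} [Semiring S] {f : R →+* S} (hf : Function.Injective f)
    (A : Matrix α α R) (k : ℕ) : A.map f ^ k = 0 ↔ A ^ k = 0 := by
  rw [← Matrix.map_pow, ← Matrix.map_zero f (map_zero f)]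
  exact (map_injective hf).eq_iff

variable [PartialOrder R] [CanonicallyOrderedAdd R] [NoZeroDivisors R] [Nontrivial R]

theorem pow_apply_getLast_ne_zero_of_isChain (A : Matrix α α R) {i : α} {p : List α}
    (h : (i :: p).IsChain (fun a b => A a b ≠ 0)) :
    (A ^ p.length) i ((i :: p).getLast (List.cons_ne_nil i p)) ≠ 0 := by
  induction p generalizing i with
  | nil => simp
  | cons l p ih =>
    obtain ⟨hil, hchain⟩ := List.isChain_cons_cons.mp h
    rw [List.length_cons, pow_succ', mul_apply, List.getLast_cons_cons]
    intro hsum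
    exact mul_ne_zero hil (ih hchain) ((Finset.sum_eq_zero_iff.mp hsum) l (Finset.mem_univ l))

theorem pow_ne_zero_of_isChain (A : Matrix α α R) {k : ℕ} {p : List α} (hp : p.length = k + 1)
    (h : p.IsChain (fun a b => A a b ≠ 0)) : A ^ k ≠ 0 := by
  obtain ⟨i, q, rfl⟩ := List.exists_cons_of_length_eq_add_one hp
  obtain rfl : q.length = k := by simpa using hp
  exact fun h0 => A.pow_apply_getLast_ne_zero_of_isChain h (by rw [h0]; rfl)

end Matrix

theorem IsAcyclicDigraph.nodup_of_isChain {n : ℕ} {E : Finset (Fin n × Fin n)}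
    (hE : IsAcyclicDigraph E) {p : List (Fin n)} (h : p.IsChain (fun a b => (a, b) ∈ E)) :
    p.Nodup := by
  have hreach : p.Pairwise (Relation.TransGen fun a b => (a, b) ∈ E) :=
    (h.imp fun _ _ => Relation.TransGen.single).pairwise
  refine hreach.imp (S := (· ≠ ·)) ?_
  rintro a _ hab rfl
  exact hE a hab

section GenericMatrix

variable {n : ℕ} (E : Finset (Fin n × Fin n))

noncomputable def polyMatrix :
    Matrix (Fin n) (Fin n) (MvPolynomial {e : Fin n × Fin n // e ∈ E} ℚ) :=
  Matrix.of fun i j => if h : (i, j) ∈ E then MvPolynomial.X ⟨(i, j), h⟩ else 0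

def adjMatrix : Matrix (Fin n) (Fin n) ℕ :=
  Matrix.of fun i j => if (i, j) ∈ E then 1 else 0

theorem genericMatrix_eq_map_polyMatrix :
    genericMatrix n E = (polyMatrix E).map (algebraMap _ _) := by
  ext i j
  simp only [genericMatrix, polyMatrix, Matrix.map_apply, Matrix.of_apply]
  split_ifs <;> simp

theorem polyMatrix_map_eval_one :
    (polyMatrix E).map (MvPolynomial.eval 1) = (adjMatrix E).map (Nat.castRingHom ℚ) := by
  ext i j
  simp only [polyMatrix, adjMatrix, Matrix.map_apply, Matrix.of_apply]
  split_ifs <;> simp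

variable {E}

theorem genericMatrix_apply_ne_zero_iff {i j : Fin n} :
    genericMatrix n E i j ≠ 0 ↔ (i, j) ∈ E := by
  simp only [genericMatrix, Matrix.of_apply]
  split_ifs with h
  · simp [h, MvPolynomial.X_ne_zero]
  · simp [h]

theorem adjMatrix_apply_ne_zero_iff {i j : Fin n} : adjMatrix E i j ≠ 0 ↔ (i, j) ∈ E := by
  simp [adjMatrix]

theorem genericMatrix_pow_eq_zero_iff {k : ℕ} :
    genericMatrix n E ^ k = 0 ↔
      ∀ p : List (Fin n), p.IsChain (fun a b => (a, b) ∈ E) → p.length ≤ k := by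
  constructor
  · intro h p hp
    by_contra! hlt
    have hpoly : polyMatrix E ^ k = 0 := by
      rwa [genericMatrix_eq_map_polyMatrix,
        Matrix.map_pow_eq_zero_iff (IsFractionRing.injective _ _)] at h
    have hadj : adjMatrix E ^ k = 0 := by
      rw [← Matrix.map_pow_eq_zero_iff (f := Nat.castRingHom ℚ) Nat.cast_injective,
        ← polyMatrix_map_eval_one, ← Matrix.map_pow, hpoly, Matrix.map_zero _ (map_zero _)]
    refine (adjMatrix E).pow_ne_zero_of_isChain (p := p.take (k + 1))
      (by rw [List.length_take]; omega) ?_ hadj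
    exact (hp.take _).imp fun _ _ => adjMatrix_apply_ne_zero_iff.mpr
  · intro h
    by_contra hk
    obtain ⟨p, hlen, hp⟩ := (genericMatrix n E).exists_isChain_of_pow_ne_zero hk
    have := h p (hp.imp fun _ _ => genericMatrix_apply_ne_zero_iff.mp)
    omega

theorem longestPath_le_iff (hE : IsAcyclicDigraph E) {k : ℕ} :
    longestPath E ≤ k ↔
      ∀ p : List (Fin n), p.IsChain (fun a b => (a, b) ∈ E) → p.length ≤ k := by
  constructor
  · intro h p hp
    rcases eq_or_ne p [] with rfl | hne
    · simp
    have hbdd : BddAbove {m | ∃ p : List (Fin n), IsPath E p ∧ m = p.length} := by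
      refine ⟨n, ?_⟩
      rintro _ ⟨q, ⟨-, hq, -⟩, rfl⟩
      simpa using hq.length_le_card
    exact (le_csSup hbdd ⟨p, ⟨hne, hE.nodup_of_isChain hp, hp⟩, rfl⟩).trans h
  · intro h
    refine csSup_le' ?_
    rintro _ ⟨p, ⟨-, -, hp⟩, rfl⟩
    exact h p hp

end GenericMatrix

/-- For an acyclic digraph `Γ = (Fin n, E)`, the generic matrix `M_Γ` is nilpotent and its
index of nilpotency equals the maximum number of vertices on a directed path in `Γ`. -/
theorem stmt_6 {n : ℕ} (E : Finset (Fin n × Fin n)) (hE : IsAcyclicDigraph E) :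
    (genericMatrix n E) ^ (longestPath E) = 0 ∧
      ∀ m : ℕ, (genericMatrix n E) ^ m = 0 → longestPath E ≤ m := by
  have key (k : ℕ) : genericMatrix n E ^ k = 0 ↔ longestPath E ≤ k :=
    genericMatrix_pow_eq_zero_iff.trans (longestPath_le_iff hE).symm
  exact ⟨(key _).mpr le_rfl, fun m => (key m).mp⟩
end

section
/- Over the field ℚ, let B be the 12×12 nilpotent Jordan matrix of shape (4,3,2,2,1), i.e. the block-diagonal matrix J(4,3,2,2,1) with Jordan blocks of sizes 4, 3, 2, 2, 1. Then there exists a nilpotent 12×12 matrix A over ℚ with AB = BA whose shape is (9,1,1,1). -/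
/-- The nilpotent Jordan matrix `J(4,3,2,2,1)` of shape `(4,3,2,2,1)`: the block-diagonal
matrix with Jordan blocks (with eigenvalue `0`) of sizes 4,3,2,2,1. -/
def B0 : Matrix (Fin 12) (Fin 12) ℚ :=
  Matrix.of fun i j => if (j : ℕ) = (i : ℕ) + 1 ∧ (i : ℕ) ≠ 3 ∧ (i : ℕ) ≠ 6 ∧ (i : ℕ) ≠ 8 ∧ (i : ℕ) ≠ 10 then 1 else 0

def BZ : Matrix (Fin 12) (Fin 12) ℤ :=
  Matrix.of fun i j => if (j : ℕ) = (i : ℕ) + 1 ∧ (i : ℕ) ≠ 3 ∧ (i : ℕ) ≠ 6 ∧ (i : ℕ) ≠ 8 ∧ (i : ℕ) ≠ 10 then 1 else 0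

def AZ : Matrix (Fin 12) (Fin 12) ℤ :=
  !![0, 1, 1, 2, 1, 2, 0, 0, 2, 1, 2, 1;
    0, 0, 1, 1, 0, 1, 2, 0, 0, 0, 1, 0;
    0, 0, 0, 1, 0, 0, 1, 0, 0, 0, 0, 0;
    0, 0, 0, 0, 0, 0, 0, 0, 0, 0, 0, 0;
    0, 1, 1, 1, 0, 2, 2, 2, 0, 2, 2, 1;
    0, 0, 1, 1, 0, 0, 2, 0, 2, 0, 2, 0;
    0, 0, 0, 1, 0, 0, 0, 0, 0, 0, 0, 0;
    0, 0, 1, 1, 0, 2, 0, 0, 1, 2, 2, 1;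
    0, 0, 0, 1, 0, 0, 2, 0, 0, 0, 2, 0;
    0, 0, 1, 1, 0, 1, 2, 0, 0, 0, 1, 0;
    0, 0, 0, 1, 0, 0, 1, 0, 0, 0, 0, 0;
    0, 0, 0, 0, 0, 0, 0, 0, 0, 0, 1, 0]


def U1 : Matrix (Fin 12) (Fin 12) ℤ :=
  !![1, 0, 0, 0, 0, 0, 0, 0, 0, 0, 0, 0;
    0, 1, 0, 0, 0, 0, 0, 0, 0, 0, 0, 0;
    0, 0, 1, 0, 0, 0, 0, 0, 0, 0, 0, 0;
    0, 0, 0, 0, 0, 0, 0, 0, 0, 0, 0, 1;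
    1, 0, -1, 1, 0, 0, 0, 0, 0, 0, 0, 0;
    0, 1, 0, 0, 1, 0, 0, 0, 0, 0, 0, 0;
    0, 0, 1, 0, 0, 1, 0, 0, 0, 0, 0, 0;
    0, 1, 0, 0, -1, 2, 1, 0, 0, 0, 0, 0;
    0, 0, 1, 0, 0, -1, 0, 2, 1, 0, 0, 0;
    0, 1, 0, 0, 0, 0, 0, 0, 0, 1, 0, 0;
    0, 0, 1, 0, 0, 0, 0, 0, 0, 0, 1, 0;
    0, 0, 0, 0, 0, 0, 0, 1, 0, 0, 0, 0]

def Ui1 : Matrix (Fin 12) (Fin 12) ℤ :=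
  !![1, 0, 0, 0, 0, 0, 0, 0, 0, 0, 0, 0;
    0, 1, 0, 0, 0, 0, 0, 0, 0, 0, 0, 0;
    0, 0, 1, 0, 0, 0, 0, 0, 0, 0, 0, 0;
    -1, 0, 1, 0, 1, 0, 0, 0, 0, 0, 0, 0;
    0, -1, 0, 0, 0, 1, 0, 0, 0, 0, 0, 0;
    0, 0, -1, 0, 0, 0, 1, 0, 0, 0, 0, 0;
    0, -2, 2, 0, 0, 1, -2, 1, 0, 0, 0, 0;
    0, 0, 0, 0, 0, 0, 0, 0, 0, 0, 0, 1;
    0, 0, -2, 0, 0, 0, 1, 0, 1, 0, 0, -2;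
    0, -1, 0, 0, 0, 0, 0, 0, 0, 1, 0, 0;
    0, 0, -1, 0, 0, 0, 0, 0, 0, 0, 1, 0;
    0, 0, 0, 1, 0, 0, 0, 0, 0, 0, 0, 0]

def V1 : Matrix (Fin 12) (Fin 12) ℤ :=
  !![0, 1, 1, 2, 1, 2, 0, 0, 2, 1, 2, 1;
    0, 0, 1, 1, 0, 1, 2, 0, 0, 0, 1, 0;
    0, 0, 0, 1, 0, 0, 1, 0, 0, 0, 0, 0;
    0, 0, 0, 0, 1, 0, -3, -2, 2, -1, 0, 0;
    0, 0, 0, 0, 0, 1, 0, 0, -2, 0, -1, 0;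
    0, 0, 0, 0, 0, 0, 1, 0, 0, 0, 0, 0;
    0, 0, 0, 0, 0, 0, 0, 0, 3, 2, 2, 1;
    0, 0, 0, 0, 0, 0, 0, 0, 0, 0, 1, 0;
    0, 0, 0, 0, 0, 0, 0, 0, 1, 0, 0, 0;
    0, 0, 0, 0, 0, 0, 0, 0, 0, 1, 0, 0;
    0, 0, 0, 0, 0, 0, 0, 1, 0, 0, 0, 0;
    1, 0, 0, 0, 0, 0, 0, 0, 0, 0, 0, 0]

def Vi1 : Matrix (Fin 12) (Fin 12) ℤ :=
  !![0, 0, 0, 0, 0, 0, 0, 0, 0, 0, 0, 1;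
    1, -1, -1, -1, -1, 0, -1, 0, 1, 0, -2, 0;
    0, 1, -1, 0, -1, -1, 0, -2, -2, 0, 0, 0;
    0, 0, 1, 0, 0, -1, 0, 0, 0, 0, 0, 0;
    0, 0, 0, 1, 0, 3, 0, 0, -2, 1, 2, 0;
    0, 0, 0, 0, 1, 0, 0, 1, 2, 0, 0, 0;
    0, 0, 0, 0, 0, 1, 0, 0, 0, 0, 0, 0;
    0, 0, 0, 0, 0, 0, 0, 0, 0, 0, 1, 0;
    0, 0, 0, 0, 0, 0, 0, 0, 1, 0, 0, 0;
    0, 0, 0, 0, 0, 0, 0, 0, 0, 1, 0, 0;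
    0, 0, 0, 0, 0, 0, 0, 1, 0, 0, 0, 0;
    0, 0, 0, 0, 0, 0, 1, -2, -3, -2, 0, 0]

def dg1 : Fin 12 → ℤ :=
  ![1, 1, 1, -1, -1, -1, 1, 1, 0, 0, 0, 0]

def U2 : Matrix (Fin 12) (Fin 12) ℤ :=
  !![1, 0, 0, 0, 0, 0, 0, 0, 0, 0, 0, 0;
    0, 1, 0, 0, 0, 0, 0, 0, 0, 0, 0, 0;
    0, 0, 1, 0, 0, 0, 0, 0, 0, 0, 0, 0;
    0, 0, 0, 0, 0, 0, 0, 1, 0, 0, 0, 0;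
    0, 7, -23, -2, -21, 1, 0, 0, 0, 0, 0, 0;
    0, 0, 7, 4, 19, -8, 1, 0, 0, 0, 0, 0;
    0, 0, 0, 0, 0, 0, 0, 0, 0, 0, 0, 1;
    0, 4, -12, 1, 0, 0, 0, 0, 0, 0, 0, 0;
    0, 0, 4, 0, 2, 0, 0, 0, 1, 0, 0, 0;
    0, 1, 0, 0, 0, 0, 0, 0, 0, 1, 0, 0;
    0, 0, 1, 0, 0, 0, 0, 0, 0, 0, 1, 0;
    0, 0, 1, 0, 1, 0, 0, 0, 0, 0, 0, 0]

def Ui2 : Matrix (Fin 12) (Fin 12) ℤ :=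
  !![1, 0, 0, 0, 0, 0, 0, 0, 0, 0, 0, 0;
    0, 1, 0, 0, 0, 0, 0, 0, 0, 0, 0, 0;
    0, 0, 1, 0, 0, 0, 0, 0, 0, 0, 0, 0;
    0, -4, 12, 0, 0, 0, 0, 1, 0, 0, 0, 0;
    0, 0, -1, 0, 0, 0, 0, 0, 0, 0, 0, 1;
    0, -15, 26, 0, 1, 0, 0, 2, 0, 0, 0, 21;
    0, -104, 172, 0, 8, 1, 0, 12, 0, 0, 0, 149;
    0, 0, 0, 1, 0, 0, 0, 0, 0, 0, 0, 0;
    0, 0, -2, 0, 0, 0, 0, 0, 1, 0, 0, -2;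
    0, -1, 0, 0, 0, 0, 0, 0, 0, 1, 0, 0;
    0, 0, -1, 0, 0, 0, 0, 0, 0, 0, 1, 0;
    0, 0, 0, 0, 0, 0, 1, 0, 0, 0, 0, 0]

def V2 : Matrix (Fin 12) (Fin 12) ℤ :=
  !![0, 1, 5, 10, 0, 4, 17, 2, 4, 2, 13, 1;
    0, 0, 1, 5, 0, 0, 4, 0, 2, 0, 2, 0;
    0, 0, 0, 1, 0, 0, 0, 0, 0, 0, 0, 0;
    0, 0, 0, 0, 0, 2, -3, 0, -4, 0, 1, 0;
    0, 0, 0, 0, 0, 0, 1, 0, 0, 0, 0, 0;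
    0, 0, 0, 0, 0, 11, 0, 0, -16, 4, 0, 2;
    0, 0, 0, 0, 0, 5, 0, 0, -7, 2, 0, 1;
    0, 0, 0, 0, 0, 0, 0, 1, 0, 0, 0, 0;
    0, 0, 0, 0, 1, 0, 0, 0, 0, 0, 0, 0;
    0, 0, 0, 0, 0, 0, 0, 0, 0, 1, 0, 0;
    1, 0, 0, 0, 0, 0, 0, 0, 0, 0, 0, 0;
    0, 0, 0, 0, 0, 5, 0, 0, -8, 2, 0, 1]

def Vi2 : Matrix (Fin 12) (Fin 12) ℤ :=
  !![0, 0, 0, 0, 0, 0, 0, 0, 0, 0, 1, 0;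
    1, -5, 15, -3, -6, 7, -14, -2, 0, 0, 0, -1;
    0, 1, -5, -2, -10, 4, -10, 0, 0, 0, 0, 2;
    0, 0, 1, 0, 0, 0, 0, 0, 0, 0, 0, 0;
    0, 0, 0, 0, 0, 0, 0, 0, 1, 0, 0, 0;
    0, 0, 0, 0, 0, 1, 0, 0, 0, 0, 0, -2;
    0, 0, 0, 0, 1, 0, 0, 0, 0, 0, 0, 0;
    0, 0, 0, 0, 0, 0, 0, 1, 0, 0, 0, 0;
    0, 0, 0, 0, 0, 0, 1, 0, 0, 0, 0, -1;
    0, 0, 0, 0, 0, 0, 0, 0, 0, 1, 0, 0;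
    0, 0, 0, 1, 3, -2, 4, 0, 0, 0, 0, 0;
    0, 0, 0, 0, 0, -5, 8, 0, 0, -2, 0, 3]

def dg2 : Fin 12 → ℤ :=
  ![1, 1, 1, 1, 1, 1, 16, 0, 0, 0, 0, 0]

def U3 : Matrix (Fin 12) (Fin 12) ℤ :=
  !![48, 9, 1, 0, 0, 0, 0, 0, 0, 0, 0, 0;
    9, 0, 0, 7, 3, 2, 0, 0, 0, 1, 0, 0;
    0, 0, 0, 0, 0, 0, 0, 0, 0, 0, 0, 1;
    0, 0, 0, 0, 0, 0, 0, 1, 0, 0, 0, 0;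
    49, 11, -40, 28365, 14180, 7090, 0, 0, 0, 0, 0, 0;
    11, 0, 0, 4, 2, 1, 0, 0, 0, 0, 0, 0;
    0, 0, 0, 0, 0, 0, 1, 0, 0, 0, 0, 0;
    32, 2, -8, 5673, 2836, 1418, 0, 0, 0, 0, 0, 0;
    2, 0, 0, 0, 0, 0, 0, 0, 1, 0, 0, 0;
    9, 0, 0, 7, 3, 2, 0, 0, 0, 2, 0, 0;
    0, 0, 0, 0, 0, 0, 0, 0, 0, 0, 1, 0;
    1, 0, 0, 0, 0, 0, 0, 0, 0, 0, 0, 0]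

def Ui3 : Matrix (Fin 12) (Fin 12) ℤ :=
  !![0, 0, 0, 0, 0, 0, 0, 0, 0, 0, 0, 1;
    0, 0, 0, 0, 1, 0, 0, -5, 0, 0, 0, 111;
    1, 0, 0, 0, -9, 0, 0, 45, 0, 0, 0, -1047;
    8, 0, 0, 0, -74, -1418, 0, 371, 0, 0, 0, 6968;
    -8, -2, 0, 0, 74, 1420, 0, -371, 0, 1, 0, -6981;
    -16, 4, 0, 0, 148, 2833, 0, -742, 0, -2, 0, -13921;
    0, 0, 0, 0, 0, 0, 1, 0, 0, 0, 0, 0;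
    0, 0, 0, 1, 0, 0, 0, 0, 0, 0, 0, 0;
    0, 0, 0, 0, 0, 0, 0, 0, 1, 0, 0, -2;
    0, -1, 0, 0, 0, 0, 0, 0, 0, 1, 0, 0;
    0, 0, 0, 0, 0, 0, 0, 0, 0, 0, 1, 0;
    0, 0, 1, 0, 0, 0, 0, 0, 0, 0, 0, 0]

def V3 : Matrix (Fin 12) (Fin 12) ℤ :=
  !![0, 0, 0, 1, 0, 0, 0, 0, 0, 0, 0, 0;
    0, 0, 1, 0, 0, 4, -72, 0, -6, 0, -28, 0;
    0, 0, 0, 0, 0, -29, 688, 0, 64, 4, 276, 2;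
    0, 0, 0, 0, 0, -240, 1, 0, 528, 32, 2276, 16;
    0, 0, 0, 0, 0, -30, 0, 0, 66, 4, 285, 2;
    0, 0, 0, 0, 0, -15, 0, 0, 33, 2, 142, 1;
    1, 0, 0, 0, 0, 0, 0, 0, 0, 0, 0, 0;
    0, 0, 0, 0, 0, 0, 0, 1, 0, 0, 0, 0;
    0, 0, 0, 0, 0, 0, 0, 0, 1, 0, 0, 0;
    0, 0, 0, 0, 0, 0, 0, 0, 0, 1, 0, 0;
    0, 0, 0, 0, 1, 0, 0, 0, 0, 0, 0, 0;
    0, 1, 0, 0, 0, 0, 0, 0, 0, 0, 0, 0]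

def Vi3 : Matrix (Fin 12) (Fin 12) ℤ :=
  !![0, 0, 0, 0, 0, 0, 1, 0, 0, 0, 0, 0;
    0, 0, 0, 0, 0, 0, 0, 0, 0, 0, 0, 1;
    0, 1, -4, 2824, -11300, -22576, 0, 0, -2, 0, 0, 0;
    1, 0, 0, 0, 0, 0, 0, 0, 0, 0, 0, 0;
    0, 0, 0, 0, 0, 0, 0, 0, 0, 0, 1, 0;
    0, 0, 1, -688, 2760, 5486, 0, 0, 2, 0, 0, 0;
    0, 0, 0, 1, -4, -8, 0, 0, 0, 0, 0, 0;
    0, 0, 0, 0, 0, 0, 0, 1, 0, 0, 0, 0;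
    0, 0, 0, 0, 0, 0, 0, 0, 1, 0, 0, 0;
    0, 0, 0, 0, 0, 0, 0, 0, 0, 1, 0, 0;
    0, 0, 0, 0, 1, -2, 0, 0, 0, 0, 0, 0;
    0, 0, 15, -10320, 41258, 82575, 0, 0, -3, -2, 0, 0]

def dg3 : Fin 12 → ℤ :=
  ![1, 1, 1, 1, -8, -32, 0, 0, 0, 0, 0, 0]

def U4 : Matrix (Fin 12) (Fin 12) ℤ :=
  !![1, 0, 0, 0, 0, 0, 0, 0, 0, 0, 0, 0;
    11, 33, 78996496, -55534080, -85976431418880, 0, 0, -7135018598400, 0, 0, 0, 0;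
    0, 0, 0, 0, 0, 1, 0, 0, 0, 0, 0, 0;
    0, 0, 0, 0, 0, 0, 0, 0, 0, 1, 0, 0;
    -10, -34, -81308111, 57159132, 88492295044065, 0, 0, 7343805279360, 0, 0, 0, 0;
    4, 12, 28748464, -20210004, -31288607335915, 0, 0, -2596581313920, 0, 0, 0, 0;
    0, 0, 0, 0, 0, 0, 1, 0, 0, 0, 0, 0;
    43, 129, 308706198, -217018673, -335982716483299, 0, 0, -27882559107040, 0, 0, 0, 0;
    0, 0, 0, 0, 0, 0, 0, 0, 1, 0, 0, 0;
    11, 33, 78996496, -55534080, -85976431418880, 0, 0, -7135018598401, 0, 0, 0, 0;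
    0, 0, 0, 0, 0, 0, 0, 0, 0, 0, 1, 0;
    0, 0, 0, 0, 0, 0, 0, 0, 0, 0, 0, 1]

def Ui4 : Matrix (Fin 12) (Fin 12) ℤ :=
  !![1, 0, 0, 0, 0, 0, 0, 0, 0, 0, 0, 0;
    21, 1, 0, 0, -16, -48, 0, 0, 0, 0, 0, 0;
    -7724, 11038, 0, 0, 5793, -19101, 0, 480, 0, 0, 0, 0;
    -765169641320, 1092701257181, 0, 0, 573877230990, -1891610388409, 0, 47689959595, 0, 128480, 0, 0;
    494240, -705800, 0, 0, -370680, 1221833, 0, -30804, 0, 0, 0, 0;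
    0, 0, 1, 0, 0, 0, 0, 0, 0, 0, 0, 0;
    0, 0, 0, 0, 0, 0, 1, 0, 0, 0, 0, 0;
    0, 1, 0, 0, 0, 0, 0, 0, 0, -1, 0, 0;
    0, 0, 0, 0, 0, 0, 0, 0, 1, 0, 0, 0;
    0, 0, 0, 1, 0, 0, 0, 0, 0, 0, 0, 0;
    0, 0, 0, 0, 0, 0, 0, 0, 0, 0, 1, 0;
    0, 0, 0, 0, 0, 0, 0, 0, 0, 0, 0, 1]

def V4 : Matrix (Fin 12) (Fin 12) ℤ :=
  !![0, 0, 11, 94, 0, 4, 75, 0, 14, 0, 40, 0;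
    0, 0, -167, 31, 0, -84, -315, 0, -166, 0, -264, 0;
    0, 0, 61792, 0, 0, 30896, 66941, 0, 61792, 0, 96572, 0;
    0, 0, 382584820660, 0, 0, 191292410330, 414464824816, 0, 382584820660, 0, 597855353775, 0;
    0, 0, 30890, 0, 0, 15445, 33464, 0, 30890, 0, 48271, 0;
    1, 0, 0, 0, 0, 0, 0, 0, 0, 0, 0, 0;
    0, 0, 15444, 0, 0, 7722, 16731, 0, 15445, 0, 25, 0;
    0, 0, 0, 0, 0, 0, 0, 1, 0, 0, 0, 0;
    0, 1, 0, 0, 0, 0, 0, 0, 0, 0, 0, 0;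
    0, 0, 0, 0, 0, 0, 0, 0, 0, 1, 0, 0;
    0, 0, 0, 0, 1, 0, 0, 0, 0, 0, 0, 0;
    0, 0, 0, 0, 0, 0, 0, 0, 0, 0, 0, 1]

def Vi4 : Matrix (Fin 12) (Fin 12) ℤ :=
  !![0, 0, 0, 0, 0, 1, 0, 0, 0, 0, 0, 0;
    0, 0, 0, 0, 0, 0, 0, 0, 1, 0, 0, 0;
    -31, 94, 224857369, -2529223114, 31325424330994828, 0, -2, 0, 0, 0, 0, 0;
    1, -3, -7187116, 80840016, -1001235434749280, 0, 0, 0, 0, 0, 0, 0;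
    0, 0, 0, 0, 0, 0, 0, 0, 0, 0, 1, 0;
    62, -188, -449745628, 5058745455, -62654554706218301, 0, 2, 0, 0, 0, 0, 0;
    0, 0, 15445, -173724, 2151640156360, 0, 0, 0, 0, 0, 0, 0;
    0, 0, 0, 0, 0, 0, 0, 1, 0, 0, 0, 0;
    0, 0, -1287, 38585, -477890424916, 0, 1, 0, 0, 0, 0, 0;
    0, 0, 0, 0, 0, 0, 0, 0, 0, 1, 0, 0;
    0, 0, 0, 1, -12385394, 0, 0, 0, 0, 0, 0, 0;
    0, 0, 0, 0, 0, 0, 0, 0, 0, 0, 0, 1]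

def dg4 : Fin 12 → ℤ :=
  ![1, -1, -1, -16, 128, 0, 0, 0, 0, 0, 0, 0]

def U5 : Matrix (Fin 12) (Fin 12) ℤ :=
  !![1, 0, 0, 0, 0, 0, 0, 0, 0, 0, 0, 0;
    0, 4, 2, 1, 0, 0, 0, 0, 0, 0, 0, 0;
    0, 0, 0, 0, 1, 0, 0, 0, 0, 0, 0, 0;
    0, 0, 0, 0, 0, 0, 0, 1, 0, 0, 0, 0;
    168, 127, 64, 32, 0, 0, 0, 0, 0, 1, 0, 0;
    0, 0, 0, 0, 0, 1, 0, 0, 0, 0, 0, 0;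
    0, 0, 0, 0, 0, 0, 1, 0, 0, 0, 0, 0;
    24, 30, 15, 8, 0, 0, 0, 0, 0, 11, 0, 0;
    0, 0, 0, 0, 0, 0, 0, 0, 1, 0, 0, 0;
    0, 4, 2, 1, 0, 0, 0, 0, 0, 1, 0, 0;
    0, 0, 0, 0, 0, 0, 0, 0, 0, 0, 1, 0;
    0, 0, 0, 0, 0, 0, 0, 0, 0, 0, 0, 1]

def Ui5 : Matrix (Fin 12) (Fin 12) ℤ :=
  !![1, 0, 0, 0, 0, 0, 0, 0, 0, 0, 0, 0;
    168, 31, 0, 0, -1, 0, 0, 0, 0, 1, 0, 0;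
    -312, -65, 0, 0, 2, 0, 0, -1, 0, 9, 0, 0;
    -48, 7, 0, 0, 0, 0, 0, 2, 0, -22, 0, 0;
    0, 0, 1, 0, 0, 0, 0, 0, 0, 0, 0, 0;
    0, 0, 0, 0, 0, 1, 0, 0, 0, 0, 0, 0;
    0, 0, 0, 0, 0, 0, 1, 0, 0, 0, 0, 0;
    0, 0, 0, 1, 0, 0, 0, 0, 0, 0, 0, 0;
    0, 0, 0, 0, 0, 0, 0, 0, 1, 0, 0, 0;
    0, -1, 0, 0, 0, 0, 0, 0, 0, 1, 0, 0;
    0, 0, 0, 0, 0, 0, 0, 0, 0, 0, 1, 0;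
    0, 0, 0, 0, 0, 0, 0, 0, 0, 0, 0, 1]

def V5 : Matrix (Fin 12) (Fin 12) ℤ :=
  !![0, 0, 4, 144, 0, 0, 87, 0, 8, 0, 36, 0;
    0, 0, 672, 24193, 0, 0, 14560, 0, 1344, 0, 6032, 0;
    0, 0, -39, -1404, 0, 0, -845, 0, -78, 0, -350, 0;
    0, 0, -3, -108, 0, 0, -65, 0, -6, 0, -27, 0;
    0, 0, 0, 0, 1, 0, 0, 0, 0, 0, 0, 0;
    0, 0, 0, 0, 0, 1, 0, 0, 0, 0, 0, 0;
    1, 0, 0, 0, 0, 0, 0, 0, 0, 0, 0, 0;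
    0, 0, 0, 0, 0, 0, 0, 1, 0, 0, 0, 0;
    0, 0, 2, 72, 0, 0, 43, 0, 3, 0, 18, 0;
    0, 0, 0, 0, 0, 0, 0, 0, 0, 1, 0, 0;
    0, 1, 0, 0, 0, 0, 0, 0, 0, 0, 0, 0;
    0, 0, 0, 0, 0, 0, 0, 0, 0, 0, 0, 1]

def Vi5 : Matrix (Fin 12) (Fin 12) ℤ :=
  !![0, 0, 0, 0, 0, 0, 1, 0, 0, 0, 0, 0;
    0, 0, 0, 0, 0, 0, 0, 0, 0, 0, 1, 0;
    -63, -36, -585, -542, 0, 0, 0, 0, 2, 0, 0, 0;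
    0, 1, 16, 16, 0, 0, 0, 0, 0, 0, 0, 0;
    0, 0, 0, 0, 1, 0, 0, 0, 0, 0, 0, 0;
    0, 0, 0, 0, 0, 1, 0, 0, 0, 0, 0, 0;
    3, 0, 0, 4, 0, 0, 0, 0, 0, 0, 0, 0;
    0, 0, 0, 0, 0, 0, 0, 1, 0, 0, 0, 0;
    -1, 0, 0, -2, 0, 0, 0, 0, -1, 0, 0, 0;
    0, 0, 0, 0, 0, 0, 0, 0, 0, 1, 0, 0;
    0, 0, 1, -13, 0, 0, 0, 0, 0, 0, 0, 0;
    0, 0, 0, 0, 0, 0, 0, 0, 0, 0, 0, 1]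

def dg5 : Fin 12 → ℤ :=
  ![1, 1, 32, 64, 0, 0, 0, 0, 0, 0, 0, 0]

def U6 : Matrix (Fin 12) (Fin 12) ℤ :=
  !![897, -64, 16, 0, 0, 0, 0, 0, 0, 0, 0, 0;
    0, 0, 0, 0, 1, 0, 0, 0, 0, 0, 0, 0;
    0, 0, 0, 0, 0, 0, 0, 1, 0, 0, 0, 0;
    0, 0, 0, 1, 0, 0, 0, 0, 0, 0, 0, 0;
    504, -35, 9, 0, 0, 0, 0, 0, 0, 0, 0, 0;
    0, 0, 0, 0, 0, 1, 0, 0, 0, 0, 0, 0;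
    0, 0, 0, 0, 0, 0, 1, 0, 0, 0, 0, 0;
    56, -4, 1, 0, 0, 0, 0, 0, 0, 0, 0, 0;
    0, 0, 0, 0, 0, 0, 0, 0, 1, 0, 0, 0;
    0, 0, 0, 0, 0, 0, 0, 0, 0, 1, 0, 0;
    0, 0, 0, 0, 0, 0, 0, 0, 0, 0, 1, 0;
    0, 0, 0, 0, 0, 0, 0, 0, 0, 0, 0, 1]

def Ui6 : Matrix (Fin 12) (Fin 12) ℤ :=
  !![1, 0, 0, 0, 0, 0, 0, -16, 0, 0, 0, 0;
    0, 0, 0, 0, 1, 0, 0, -9, 0, 0, 0, 0;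
    -56, 0, 0, 0, 4, 0, 0, 861, 0, 0, 0, 0;
    0, 0, 0, 1, 0, 0, 0, 0, 0, 0, 0, 0;
    0, 1, 0, 0, 0, 0, 0, 0, 0, 0, 0, 0;
    0, 0, 0, 0, 0, 1, 0, 0, 0, 0, 0, 0;
    0, 0, 0, 0, 0, 0, 1, 0, 0, 0, 0, 0;
    0, 0, 1, 0, 0, 0, 0, 0, 0, 0, 0, 0;
    0, 0, 0, 0, 0, 0, 0, 0, 1, 0, 0, 0;
    0, 0, 0, 0, 0, 0, 0, 0, 0, 1, 0, 0;
    0, 0, 0, 0, 0, 0, 0, 0, 0, 0, 1, 0;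
    0, 0, 0, 0, 0, 0, 0, 0, 0, 0, 0, 1]

def V6 : Matrix (Fin 12) (Fin 12) ℤ :=
  !![0, 0, 0, 7, 0, 0, 56, 0, 0, 0, 16, 0;
    0, 0, 0, 0, 0, 0, 1, 0, 0, 0, 0, 0;
    0, 0, 0, 3, 0, 0, 24, 0, 0, 0, 7, 0;
    1, 0, 0, 0, 0, 0, 0, 0, 0, 0, 0, 0;
    0, 0, 0, 0, 1, 0, 0, 0, 0, 0, 0, 0;
    0, 0, 0, 0, 0, 1, 0, 0, 0, 0, 0, 0;
    0, 1, 0, 0, 0, 0, 0, 0, 0, 0, 0, 0;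
    0, 0, 0, 0, 0, 0, 0, 1, 0, 0, 0, 0;
    0, 0, 0, 0, 0, 0, 0, 0, 1, 0, 0, 0;
    0, 0, 0, 0, 0, 0, 0, 0, 0, 1, 0, 0;
    0, 0, 1, 0, 0, 0, 0, 0, 0, 0, 0, 0;
    0, 0, 0, 0, 0, 0, 0, 0, 0, 0, 0, 1]

def Vi6 : Matrix (Fin 12) (Fin 12) ℤ :=
  !![0, 0, 0, 1, 0, 0, 0, 0, 0, 0, 0, 0;
    0, 0, 0, 0, 0, 0, 1, 0, 0, 0, 0, 0;
    0, 0, 0, 0, 0, 0, 0, 0, 0, 0, 1, 0;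
    7, -8, -16, 0, 0, 0, 0, 0, 0, 0, 0, 0;
    0, 0, 0, 0, 1, 0, 0, 0, 0, 0, 0, 0;
    0, 0, 0, 0, 0, 1, 0, 0, 0, 0, 0, 0;
    0, 1, 0, 0, 0, 0, 0, 0, 0, 0, 0, 0;
    0, 0, 0, 0, 0, 0, 0, 1, 0, 0, 0, 0;
    0, 0, 0, 0, 0, 0, 0, 0, 1, 0, 0, 0;
    0, 0, 0, 0, 0, 0, 0, 0, 0, 1, 0, 0;
    -3, 0, 7, 0, 0, 0, 0, 0, 0, 0, 0, 0;
    0, 0, 0, 0, 0, 0, 0, 0, 0, 0, 0, 1]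

def dg6 : Fin 12 → ℤ :=
  ![1, 16, -128, 0, 0, 0, 0, 0, 0, 0, 0, 0]

def U7 : Matrix (Fin 12) (Fin 12) ℤ :=
  !![1, 0, 0, 0, 0, 0, 0, 0, 0, 0, 0, 0;
    0, 0, 0, 0, 1, 0, 0, 0, 0, 0, 0, 0;
    0, 0, 1, 0, 0, 0, 0, 0, 0, 0, 0, 0;
    0, 0, 0, 1, 0, 0, 0, 0, 0, 0, 0, 0;
    2, 1, 0, 0, 0, 0, 0, 0, 0, 0, 0, 0;
    0, 0, 0, 0, 0, 1, 0, 0, 0, 0, 0, 0;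
    0, 0, 0, 0, 0, 0, 1, 0, 0, 0, 0, 0;
    0, 0, 0, 0, 0, 0, 0, 1, 0, 0, 0, 0;
    0, 0, 0, 0, 0, 0, 0, 0, 1, 0, 0, 0;
    0, 0, 0, 0, 0, 0, 0, 0, 0, 1, 0, 0;
    0, 0, 0, 0, 0, 0, 0, 0, 0, 0, 1, 0;
    0, 0, 0, 0, 0, 0, 0, 0, 0, 0, 0, 1]

def Ui7 : Matrix (Fin 12) (Fin 12) ℤ :=
  !![1, 0, 0, 0, 0, 0, 0, 0, 0, 0, 0, 0;
    -2, 0, 0, 0, 1, 0, 0, 0, 0, 0, 0, 0;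
    0, 0, 1, 0, 0, 0, 0, 0, 0, 0, 0, 0;
    0, 0, 0, 1, 0, 0, 0, 0, 0, 0, 0, 0;
    0, 1, 0, 0, 0, 0, 0, 0, 0, 0, 0, 0;
    0, 0, 0, 0, 0, 1, 0, 0, 0, 0, 0, 0;
    0, 0, 0, 0, 0, 0, 1, 0, 0, 0, 0, 0;
    0, 0, 0, 0, 0, 0, 0, 1, 0, 0, 0, 0;
    0, 0, 0, 0, 0, 0, 0, 0, 1, 0, 0, 0;
    0, 0, 0, 0, 0, 0, 0, 0, 0, 1, 0, 0;
    0, 0, 0, 0, 0, 0, 0, 0, 0, 0, 1, 0;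
    0, 0, 0, 0, 0, 0, 0, 0, 0, 0, 0, 1]

def V7 : Matrix (Fin 12) (Fin 12) ℤ :=
  !![0, 0, 0, 9, 0, 0, 2, 0, 0, 0, 0, 0;
    0, 0, 0, 4, 0, 0, 1, 0, 0, 0, 0, 0;
    0, 0, 1, 0, 0, 0, 0, 0, 0, 0, 0, 0;
    0, 1, 0, 0, 0, 0, 0, 0, 0, 0, 0, 0;
    0, 0, 0, 0, 1, 0, 0, 0, 0, 0, 0, 0;
    0, 0, 0, 0, 0, 1, 0, 0, 0, 0, 0, 0;
    1, 0, 0, 0, 0, 0, 0, 0, 0, 0, 0, 0;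
    0, 0, 0, 0, 0, 0, 0, 1, 0, 0, 0, 0;
    0, 0, 0, 0, 0, 0, 0, 0, 1, 0, 0, 0;
    0, 0, 0, 0, 0, 0, 0, 0, 0, 1, 0, 0;
    0, 0, 0, 0, 0, 0, 0, 0, 0, 0, 1, 0;
    0, 0, 0, 0, 0, 0, 0, 0, 0, 0, 0, 1]

def Vi7 : Matrix (Fin 12) (Fin 12) ℤ :=
  !![0, 0, 0, 0, 0, 0, 1, 0, 0, 0, 0, 0;
    0, 0, 0, 1, 0, 0, 0, 0, 0, 0, 0, 0;
    0, 0, 1, 0, 0, 0, 0, 0, 0, 0, 0, 0;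
    1, -2, 0, 0, 0, 0, 0, 0, 0, 0, 0, 0;
    0, 0, 0, 0, 1, 0, 0, 0, 0, 0, 0, 0;
    0, 0, 0, 0, 0, 1, 0, 0, 0, 0, 0, 0;
    -4, 9, 0, 0, 0, 0, 0, 0, 0, 0, 0, 0;
    0, 0, 0, 0, 0, 0, 0, 1, 0, 0, 0, 0;
    0, 0, 0, 0, 0, 0, 0, 0, 1, 0, 0, 0;
    0, 0, 0, 0, 0, 0, 0, 0, 0, 1, 0, 0;
    0, 0, 0, 0, 0, 0, 0, 0, 0, 0, 1, 0;
    0, 0, 0, 0, 0, 0, 0, 0, 0, 0, 0, 1]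

def dg7 : Fin 12 → ℤ :=
  ![8, -32, 0, 0, 0, 0, 0, 0, 0, 0, 0, 0]

def U8 : Matrix (Fin 12) (Fin 12) ℤ :=
  !![1, 0, 0, 0, 0, 0, 0, 0, 0, 0, 0, 0;
    0, 1, 0, 0, 0, 0, 0, 0, 0, 0, 0, 0;
    0, 0, 1, 0, 0, 0, 0, 0, 0, 0, 0, 0;
    0, 0, 0, 1, 0, 0, 0, 0, 0, 0, 0, 0;
    0, 0, 0, 0, 1, 0, 0, 0, 0, 0, 0, 0;
    0, 0, 0, 0, 0, 1, 0, 0, 0, 0, 0, 0;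
    0, 0, 0, 0, 0, 0, 1, 0, 0, 0, 0, 0;
    0, 0, 0, 0, 0, 0, 0, 1, 0, 0, 0, 0;
    0, 0, 0, 0, 0, 0, 0, 0, 1, 0, 0, 0;
    0, 0, 0, 0, 0, 0, 0, 0, 0, 1, 0, 0;
    0, 0, 0, 0, 0, 0, 0, 0, 0, 0, 1, 0;
    0, 0, 0, 0, 0, 0, 0, 0, 0, 0, 0, 1]

def Ui8 : Matrix (Fin 12) (Fin 12) ℤ :=
  !![1, 0, 0, 0, 0, 0, 0, 0, 0, 0, 0, 0;
    0, 1, 0, 0, 0, 0, 0, 0, 0, 0, 0, 0;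
    0, 0, 1, 0, 0, 0, 0, 0, 0, 0, 0, 0;
    0, 0, 0, 1, 0, 0, 0, 0, 0, 0, 0, 0;
    0, 0, 0, 0, 1, 0, 0, 0, 0, 0, 0, 0;
    0, 0, 0, 0, 0, 1, 0, 0, 0, 0, 0, 0;
    0, 0, 0, 0, 0, 0, 1, 0, 0, 0, 0, 0;
    0, 0, 0, 0, 0, 0, 0, 1, 0, 0, 0, 0;
    0, 0, 0, 0, 0, 0, 0, 0, 1, 0, 0, 0;
    0, 0, 0, 0, 0, 0, 0, 0, 0, 1, 0, 0;
    0, 0, 0, 0, 0, 0, 0, 0, 0, 0, 1, 0;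
    0, 0, 0, 0, 0, 0, 0, 0, 0, 0, 0, 1]

def V8 : Matrix (Fin 12) (Fin 12) ℤ :=
  !![0, 0, 0, 1, 0, 0, 0, 0, 0, 0, 0, 0;
    0, 1, 0, 0, 0, 0, 0, 0, 0, 0, 0, 0;
    0, 0, 1, 0, 0, 0, 0, 0, 0, 0, 0, 0;
    1, 0, 0, 0, 0, 0, 0, 0, 0, 0, 0, 0;
    0, 0, 0, 0, 1, 0, 0, 0, 0, 0, 0, 0;
    0, 0, 0, 0, 0, 1, 0, 0, 0, 0, 0, 0;
    0, 0, 0, 0, 0, 0, 1, 0, 0, 0, 0, 0;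
    0, 0, 0, 0, 0, 0, 0, 1, 0, 0, 0, 0;
    0, 0, 0, 0, 0, 0, 0, 0, 1, 0, 0, 0;
    0, 0, 0, 0, 0, 0, 0, 0, 0, 1, 0, 0;
    0, 0, 0, 0, 0, 0, 0, 0, 0, 0, 1, 0;
    0, 0, 0, 0, 0, 0, 0, 0, 0, 0, 0, 1]

def Vi8 : Matrix (Fin 12) (Fin 12) ℤ :=
  !![0, 0, 0, 1, 0, 0, 0, 0, 0, 0, 0, 0;
    0, 1, 0, 0, 0, 0, 0, 0, 0, 0, 0, 0;
    0, 0, 1, 0, 0, 0, 0, 0, 0, 0, 0, 0;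
    1, 0, 0, 0, 0, 0, 0, 0, 0, 0, 0, 0;
    0, 0, 0, 0, 1, 0, 0, 0, 0, 0, 0, 0;
    0, 0, 0, 0, 0, 1, 0, 0, 0, 0, 0, 0;
    0, 0, 0, 0, 0, 0, 1, 0, 0, 0, 0, 0;
    0, 0, 0, 0, 0, 0, 0, 1, 0, 0, 0, 0;
    0, 0, 0, 0, 0, 0, 0, 0, 1, 0, 0, 0;
    0, 0, 0, 0, 0, 0, 0, 0, 0, 1, 0, 0;
    0, 0, 0, 0, 0, 0, 0, 0, 0, 0, 1, 0;
    0, 0, 0, 0, 0, 0, 0, 0, 0, 0, 0, 1]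

def dg8 : Fin 12 → ℤ :=
  ![16, 0, 0, 0, 0, 0, 0, 0, 0, 0, 0, 0]

noncomputable def Aq : Matrix (Fin 12) (Fin 12) ℚ := (Int.castRingHom ℚ).mapMatrix AZ

lemma key {n : Type} [Fintype n] [DecidableEq n]
    (N U Ui V Vi : Matrix n n ℤ) (d : n → ℤ) (r : ℕ)
    (hU : U * Ui = 1) (hV : V * Vi = 1) (hN : N = U * (Matrix.diagonal d * V))
    (hcard : Fintype.card {i // d i ≠ 0} = r) :
    Module.finrank ℚ (LinearMap.ker ((Int.castRingHom ℚ).mapMatrix N).mulVecLin)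
      = Fintype.card n - r := by
  set f := Int.castRingHom ℚ with hf
  have hUq : (f.mapMatrix U) * (f.mapMatrix Ui) = 1 := by rw [← map_mul, hU, map_one]
  have hVq : (f.mapMatrix V) * (f.mapMatrix Vi) = 1 := by rw [← map_mul, hV, map_one]
  have hUu : IsUnit (f.mapMatrix U).det :=
    IsUnit.of_mul_eq_one (f.mapMatrix Ui).det
      (by rw [← Matrix.det_mul, hUq, Matrix.det_one])
  have hVu : IsUnit (f.mapMatrix V).det :=
    IsUnit.of_mul_eq_one (f.mapMatrix Vi).det
      (by rw [← Matrix.det_mul, hVq, Matrix.det_one])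
  have hNq : f.mapMatrix N
      = f.mapMatrix U * (Matrix.diagonal (fun i => (d i : ℚ)) * f.mapMatrix V) := by
    rw [hN, map_mul, map_mul]
    congr 2
    rw [RingHom.mapMatrix_apply, Matrix.diagonal_map (map_zero f)]
    rfl
  have hrank : (f.mapMatrix N).rank = r := by
    rw [hNq, Matrix.rank_mul_eq_right_of_isUnit_det _ _ hUu,
        Matrix.rank_mul_eq_left_of_isUnit_det _ _ hVu, Matrix.rank_diagonal, ← hcard]
    exact Fintype.card_congr (Equiv.subtypeEquivRight (fun i => by simp))
  have h2 := LinearMap.finrank_range_add_finrank_ker ((f.mapMatrix N).mulVecLin)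
  rw [Module.finrank_pi] at h2
  rw [Matrix.rank] at hrank
  omega

lemma hpow (k : ℕ) : Aq ^ k = (Int.castRingHom ℚ).mapMatrix (AZ ^ k) :=
  (map_pow (Int.castRingHom ℚ).mapMatrix AZ k).symm

set_option maxHeartbeats 1000000 in
lemma case0 :
    Module.finrank ℚ (LinearMap.ker ((Int.castRingHom ℚ).mapMatrix (AZ ^ 0)).mulVecLin) = 0 :=
  (key (AZ ^ 0) 1 1 1 1 (fun _ => 1) 12 (by decide) (by decide) (by decide) (by decide)).trans
    (by decide)

set_option maxHeartbeats 1000000 in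
lemma case1 :
    Module.finrank ℚ (LinearMap.ker ((Int.castRingHom ℚ).mapMatrix (AZ ^ 1)).mulVecLin) = 4 :=
  (key (AZ ^ 1) U1 Ui1 V1 Vi1 dg1 8 (by decide) (by decide) (by decide) (by decide)).trans
    (by decide)

set_option maxHeartbeats 1000000 in
lemma case2 :
    Module.finrank ℚ (LinearMap.ker ((Int.castRingHom ℚ).mapMatrix (AZ ^ 2)).mulVecLin) = 5 :=
  (key (AZ ^ 2) U2 Ui2 V2 Vi2 dg2 7 (by decide) (by decide) (by decide) (by decide)).trans
    (by decide)

set_option maxHeartbeats 1000000 in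
lemma case3 :
    Module.finrank ℚ (LinearMap.ker ((Int.castRingHom ℚ).mapMatrix (AZ ^ 3)).mulVecLin) = 6 :=
  (key (AZ ^ 3) U3 Ui3 V3 Vi3 dg3 6 (by decide) (by decide) (by decide) (by decide)).trans
    (by decide)

set_option maxHeartbeats 1000000 in
lemma case4 :
    Module.finrank ℚ (LinearMap.ker ((Int.castRingHom ℚ).mapMatrix (AZ ^ 4)).mulVecLin) = 7 :=
  (key (AZ ^ 4) U4 Ui4 V4 Vi4 dg4 5 (by decide) (by decide) (by decide) (by decide)).trans
    (by decide)

set_option maxHeartbeats 1000000 in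
lemma case5 :
    Module.finrank ℚ (LinearMap.ker ((Int.castRingHom ℚ).mapMatrix (AZ ^ 5)).mulVecLin) = 8 :=
  (key (AZ ^ 5) U5 Ui5 V5 Vi5 dg5 4 (by decide) (by decide) (by decide) (by decide)).trans
    (by decide)

set_option maxHeartbeats 1000000 in
lemma case6 :
    Module.finrank ℚ (LinearMap.ker ((Int.castRingHom ℚ).mapMatrix (AZ ^ 6)).mulVecLin) = 9 :=
  (key (AZ ^ 6) U6 Ui6 V6 Vi6 dg6 3 (by decide) (by decide) (by decide) (by decide)).trans
    (by decide)

set_option maxHeartbeats 1000000 in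
lemma case7 :
    Module.finrank ℚ (LinearMap.ker ((Int.castRingHom ℚ).mapMatrix (AZ ^ 7)).mulVecLin) = 10 :=
  (key (AZ ^ 7) U7 Ui7 V7 Vi7 dg7 2 (by decide) (by decide) (by decide) (by decide)).trans
    (by decide)

set_option maxHeartbeats 1000000 in
lemma case8 :
    Module.finrank ℚ (LinearMap.ker ((Int.castRingHom ℚ).mapMatrix (AZ ^ 8)).mulVecLin) = 11 :=
  (key (AZ ^ 8) U8 Ui8 V8 Vi8 dg8 1 (by decide) (by decide) (by decide) (by decide)).trans
    (by decide)

/-- There is a nilpotent matrix `A` over `ℚ` commuting with `B0 = J(4,3,2,2,1)` whose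
shape is `(9,1,1,1)`. -/
theorem stmt_11 :
    ∃ A : Matrix (Fin 12) (Fin 12) ℚ, IsNilpotent A ∧ A * B0 = B0 * A ∧
      hasShape A ({9, 1, 1, 1} : Multiset ℕ) := by
  have hB : B0 = (Int.castRingHom ℚ).mapMatrix BZ := by
    ext i j
    simp only [B0, BZ, RingHom.mapMatrix_apply, Matrix.map_apply, Matrix.of_apply]
    split <;> simp
  have h9 : Aq ^ 9 = 0 := by
    rw [hpow, show AZ ^ 9 = 0 from by decide, map_zero]
  refine ⟨Aq, ⟨9, h9⟩, ?_, ?_, ?_, ?_⟩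
  · rw [hB, Aq, ← map_mul, ← map_mul, show AZ * BZ = BZ * AZ from by decide]
  · decide
  · decide
  · intro k
    match k with
    | 0 => rw [hpow]; exact case0.trans (by decide)
    | 1 => rw [hpow]; exact case1.trans (by decide)
    | 2 => rw [hpow]; exact case2.trans (by decide)
    | 3 => rw [hpow]; exact case3.trans (by decide)
    | 4 => rw [hpow]; exact case4.trans (by decide)
    | 5 => rw [hpow]; exact case5.trans (by decide)
    | 6 => rw [hpow]; exact case6.trans (by decide)
    | 7 => rw [hpow]; exact case7.trans (by decide)
    | 8 => rw [hpow]; exact case8.trans (by decide)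
    | (n + 9) =>
      have h0 : Aq ^ (n + 9) = 0 := by
        rw [show n + 9 = 9 + n from by omega, pow_add, h9, zero_mul]
      rw [h0, Matrix.mulVecLin_zero, LinearMap.ker_zero]
      have hfr : Module.finrank ℚ (⊤ : Submodule ℚ (Fin 12 → ℚ)) = 12 := by
        rw [finrank_top, Module.finrank_fin_fun]
      rw [hfr]
      have h1 : min 9 (n + 9) = 9 := by omega
      have h2 : min 1 (n + 9) = 1 := by omega
      simp [Multiset.insert_eq_cons, h1, h2]
end

section
/- Over the field ℚ, let B be the 12×12 nilpotent Jordan matrix of shape (4,3,2,2,1), i.e. the block-diagonal matrix J(4,3,2,2,1) with Jordan blocks of sizes 4, 3, 2, 2, 1. Then there exists a nilpotent 12×12 matrix A over ℚ with AB = BA whose shape is (9,2,1). -/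
set_option maxHeartbeats 4000000

namespace Stmt12Aux

def B0Z : Matrix (Fin 12) (Fin 12) ℤ :=
  Matrix.of fun i j => if (j : ℕ) = (i : ℕ) + 1 ∧ (i : ℕ) ≠ 3 ∧ (i : ℕ) ≠ 6 ∧ (i : ℕ) ≠ 8 ∧ (i : ℕ) ≠ 10 then 1 else 0

def CmZ : Matrix (Fin 12) (Fin 12) ℤ :=
  Matrix.of fun i j => if (j : ℕ) = (i : ℕ) + 1 ∧ (i : ℕ) ≠ 8 ∧ (i : ℕ) ≠ 10 then 1 else 0

def AmZ : Matrix (Fin 12) (Fin 12) ℤ :=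
  Matrix.of ![
    ![0, 0, 0, 0, 1, 0, 0, 0, 0, 0, 0, 0],
    ![0, 0, 0, 0, 0, 1, 0, 0, 0, 0, 0, 0],
    ![0, 0, 0, 0, 0, 0, 1, 0, 0, 0, 0, 0],
    ![0, 0, 0, 0, 0, 0, 0, 0, 0, 0, 0, 0],
    ![0, 1, 0, 0, 0, 0, 0, 1, 0, 0, 0, 0],
    ![0, 0, 1, 0, 0, 0, 0, 0, 1, 0, 0, 0],
    ![0, 0, 0, 1, 0, 0, 0, 0, 0, 0, 0, 0],
    ![0, 0, 0, 0, 0, 1, 0, 1, 0, -1, 0, 0],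
    ![0, 0, 0, 0, 0, 0, 1, 0, 1, 0, -1, 0],
    ![0, 0, 0, 0, 0, 0, 0, 1, 0, -1, 0, 1],
    ![0, 0, 0, 0, 0, 0, 0, 0, 1, 0, -1, 0],
    ![0, 0, 0, 0, 0, 0, 0, 0, -1, 0, 1, 0]]

def QmZ : Matrix (Fin 12) (Fin 12) ℤ :=
  Matrix.of ![
    ![1, 6, 9, 4, 0, -3, 0, 1, 0, 0, -1, -1],
    ![0, 0, 0, 1, 3, 2, 0, -1, 0, 1, 2, 1],
    ![0, 0, 0, 0, 0, 0, 1, 1, 0, 0, 1, 1],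
    ![0, 0, 0, 0, 0, 0, 0, 0, 1, 0, 0, 0],
    ![0, 1, 6, 9, 4, 0, -3, 0, 1, 0, 0, 0],
    ![0, 0, 0, 0, 1, 3, 2, 0, -1, 0, 1, 0],
    ![0, 0, 0, 0, 0, 0, 0, 1, 1, 0, 0, 0],
    ![0, 0, 1, 5, 6, 2, 0, -2, 0, -1, -2, -1],
    ![0, 0, 0, 0, 0, 1, 2, 1, 0, 0, -1, -1],
    ![0, 0, 1, 4, 2, -1, 0, -2, 1, -1, 0, -1],
    ![0, 0, 0, 0, 0, 1, 1, 0, 0, 0, -1, -1],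
    ![0, 0, 0, 0, 0, -1, -1, 0, -1, 0, 1, 0]]

def QimZ : Matrix (Fin 12) (Fin 12) ℤ :=
  Matrix.of ![
    ![1, 27, -908, -430, -6, 229, 100, -85, 888, 112, -1797, -453],
    ![0, -6, 229, 100, 1, -58, -20, 21, -227, -27, 456, 112],
    ![0, 1, -58, -20, 0, 15, 2, -5, 59, 6, -117, -27],
    ![0, 0, 15, 2, 0, -4, 1, 1, -16, -1, 31, 6],
    ![0, 0, -4, 1, 0, 1, -1, 0, 5, 0, -9, -1],
    ![0, 0, 1, -1, 0, 0, 1, 0, -2, 0, 3, 0],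
    ![0, 0, 0, 1, 0, 0, -1, 0, 1, 0, -1, 0],
    ![0, 0, 0, -1, 0, 0, 1, 0, 0, 0, 0, 0],
    ![0, 0, 0, 1, 0, 0, 0, 0, 0, 0, 0, 0],
    ![0, 1, -7, -5, 0, 1, 1, -1, 7, 1, -13, -4],
    ![0, 0, 1, 1, 0, 0, 0, 0, -1, 0, 2, 1],
    ![0, 0, 0, -1, 0, 0, 0, 0, 0, 0, -1, -1]]

noncomputable def phi : Matrix (Fin 12) (Fin 12) ℤ →+* Matrix (Fin 12) (Fin 12) ℚ :=
  (Int.castRingHom ℚ).mapMatrix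

noncomputable def Am : Matrix (Fin 12) (Fin 12) ℚ := phi AmZ
noncomputable def Qm : Matrix (Fin 12) (Fin 12) ℚ := phi QmZ
noncomputable def Qim : Matrix (Fin 12) (Fin 12) ℚ := phi QimZ
noncomputable def Cm : Matrix (Fin 12) (Fin 12) ℚ := phi CmZ

def M0Z : Matrix (Fin 12) (Fin 12) ℤ :=
  Matrix.of fun i j => if (j : ℕ) = (i : ℕ) + 0 ∧ ((i : ℕ) = 0 ∨ (i : ℕ) = 1 ∨ (i : ℕ) = 2 ∨ (i : ℕ) = 3 ∨ (i : ℕ) = 4 ∨ (i : ℕ) = 5 ∨ (i : ℕ) = 6 ∨ (i : ℕ) = 7 ∨ (i : ℕ) = 8 ∨ (i : ℕ) = 9 ∨ (i : ℕ) = 10 ∨ (i : ℕ) = 11) then 1 else 0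

def M1Z : Matrix (Fin 12) (Fin 12) ℤ :=
  Matrix.of fun i j => if (j : ℕ) = (i : ℕ) + 1 ∧ ((i : ℕ) = 0 ∨ (i : ℕ) = 1 ∨ (i : ℕ) = 2 ∨ (i : ℕ) = 3 ∨ (i : ℕ) = 4 ∨ (i : ℕ) = 5 ∨ (i : ℕ) = 6 ∨ (i : ℕ) = 7 ∨ (i : ℕ) = 9) then 1 else 0

def M2Z : Matrix (Fin 12) (Fin 12) ℤ :=
  Matrix.of fun i j => if (j : ℕ) = (i : ℕ) + 2 ∧ ((i : ℕ) = 0 ∨ (i : ℕ) = 1 ∨ (i : ℕ) = 2 ∨ (i : ℕ) = 3 ∨ (i : ℕ) = 4 ∨ (i : ℕ) = 5 ∨ (i : ℕ) = 6) then 1 else 0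

def M3Z : Matrix (Fin 12) (Fin 12) ℤ :=
  Matrix.of fun i j => if (j : ℕ) = (i : ℕ) + 3 ∧ ((i : ℕ) = 0 ∨ (i : ℕ) = 1 ∨ (i : ℕ) = 2 ∨ (i : ℕ) = 3 ∨ (i : ℕ) = 4 ∨ (i : ℕ) = 5) then 1 else 0

def M4Z : Matrix (Fin 12) (Fin 12) ℤ :=
  Matrix.of fun i j => if (j : ℕ) = (i : ℕ) + 4 ∧ ((i : ℕ) = 0 ∨ (i : ℕ) = 1 ∨ (i : ℕ) = 2 ∨ (i : ℕ) = 3 ∨ (i : ℕ) = 4) then 1 else 0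

def M5Z : Matrix (Fin 12) (Fin 12) ℤ :=
  Matrix.of fun i j => if (j : ℕ) = (i : ℕ) + 5 ∧ ((i : ℕ) = 0 ∨ (i : ℕ) = 1 ∨ (i : ℕ) = 2 ∨ (i : ℕ) = 3) then 1 else 0

def M6Z : Matrix (Fin 12) (Fin 12) ℤ :=
  Matrix.of fun i j => if (j : ℕ) = (i : ℕ) + 6 ∧ ((i : ℕ) = 0 ∨ (i : ℕ) = 1 ∨ (i : ℕ) = 2) then 1 else 0

def M7Z : Matrix (Fin 12) (Fin 12) ℤ :=
  Matrix.of fun i j => if (j : ℕ) = (i : ℕ) + 7 ∧ ((i : ℕ) = 0 ∨ (i : ℕ) = 1) then 1 else 0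

def M8Z : Matrix (Fin 12) (Fin 12) ℤ :=
  Matrix.of fun i j => if (j : ℕ) = (i : ℕ) + 8 ∧ ((i : ℕ) = 0) then 1 else 0

def coordKer (n : ℕ) (S : Finset (Fin n)) : Submodule ℚ (Fin n → ℚ) where
  carrier := {v | ∀ j ∈ S, v j = 0}
  add_mem' := by intro a b ha hb j hj; simp only [Set.mem_setOf_eq] at *; simp [ha j hj, hb j hj]
  zero_mem' := by intro j _; rfl
  smul_mem' := by intro c a ha j hj; simp only [Set.mem_setOf_eq] at *; simp [ha j hj]

lemma mem_coordKer {n : ℕ} {S : Finset (Fin n)} {v : Fin n → ℚ} :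
    v ∈ coordKer n S ↔ ∀ j ∈ S, v j = 0 := Iff.rfl

lemma finrank_coordKer (n : ℕ) (S : Finset (Fin n)) :
    Module.finrank ℚ (coordKer n S) = n - S.card := by
  have heq : coordKer n S
      = LinearMap.ker (LinearMap.funLeft ℚ ℚ (Subtype.val : {x // x ∈ S} → Fin n)) := by
    ext v
    simp [mem_coordKer, LinearMap.mem_ker, LinearMap.funLeft, funext_iff, Subtype.forall]
  have hsurj : Function.Surjective
      (LinearMap.funLeft ℚ ℚ (Subtype.val : {x // x ∈ S} → Fin n)) :=
    LinearMap.funLeft_surjective_of_injective ℚ ℚ _ Subtype.val_injective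
  have h := LinearMap.finrank_range_add_finrank_ker
    (LinearMap.funLeft ℚ ℚ (Subtype.val : {x // x ∈ S} → Fin n))
  rw [LinearMap.range_eq_top.2 hsurj, finrank_top] at h
  rw [heq]
  have h1 : Module.finrank ℚ ({x // x ∈ S} → ℚ) = S.card := by
    rw [Module.finrank_pi]; exact Fintype.card_coe S
  have h2 : Module.finrank ℚ (Fin n → ℚ) = n := by
    rw [Module.finrank_pi]; exact Fintype.card_fin n
  omega

lemma hker0 : LinearMap.ker ((phi M0Z).mulVecLin)
    = coordKer 12 ({0, 1, 2, 3, 4, 5, 6, 7, 8, 9, 10, 11} : Finset (Fin 12)) := by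
  ext v
  rw [LinearMap.mem_ker, mem_coordKer, Matrix.mulVecLin_apply]
  constructor
  · intro h
    have h0 := congrFun h 0
    have h1 := congrFun h 1
    have h2 := congrFun h 2
    have h3 := congrFun h 3
    have h4 := congrFun h 4
    have h5 := congrFun h 5
    have h6 := congrFun h 6
    have h7 := congrFun h 7
    have h8 := congrFun h 8
    have h9 := congrFun h 9
    have h10 := congrFun h 10
    have h11 := congrFun h 11
    simp +decide [Matrix.mulVec, dotProduct, Fin.sum_univ_succ, phi, M0Z] at h0 h1 h2 h3 h4 h5 h6 h7 h8 h9 h10 h11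
    intro j hj
    fin_cases hj <;> assumption
  · intro h
    funext i
    fin_cases i <;>
      simp +decide [Matrix.mulVec, dotProduct, Fin.sum_univ_succ, phi, M0Z] <;>
      (apply h; decide)

lemma hker1 : LinearMap.ker ((phi M1Z).mulVecLin)
    = coordKer 12 ({1, 2, 3, 4, 5, 6, 7, 8, 10} : Finset (Fin 12)) := by
  ext v
  rw [LinearMap.mem_ker, mem_coordKer, Matrix.mulVecLin_apply]
  constructor
  · intro h
    have h0 := congrFun h 0
    have h1 := congrFun h 1
    have h2 := congrFun h 2
    have h3 := congrFun h 3
    have h4 := congrFun h 4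
    have h5 := congrFun h 5
    have h6 := congrFun h 6
    have h7 := congrFun h 7
    have h9 := congrFun h 9
    simp +decide [Matrix.mulVec, dotProduct, Fin.sum_univ_succ, phi, M1Z] at h0 h1 h2 h3 h4 h5 h6 h7 h9
    intro j hj
    fin_cases hj <;> assumption
  · intro h
    funext i
    fin_cases i <;>
      simp +decide [Matrix.mulVec, dotProduct, Fin.sum_univ_succ, phi, M1Z] <;>
      (apply h; decide)

lemma hker2 : LinearMap.ker ((phi M2Z).mulVecLin)
    = coordKer 12 ({2, 3, 4, 5, 6, 7, 8} : Finset (Fin 12)) := by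
  ext v
  rw [LinearMap.mem_ker, mem_coordKer, Matrix.mulVecLin_apply]
  constructor
  · intro h
    have h0 := congrFun h 0
    have h1 := congrFun h 1
    have h2 := congrFun h 2
    have h3 := congrFun h 3
    have h4 := congrFun h 4
    have h5 := congrFun h 5
    have h6 := congrFun h 6
    simp +decide [Matrix.mulVec, dotProduct, Fin.sum_univ_succ, phi, M2Z] at h0 h1 h2 h3 h4 h5 h6
    intro j hj
    fin_cases hj <;> assumption
  · intro h
    funext i
    fin_cases i <;>
      simp +decide [Matrix.mulVec, dotProduct, Fin.sum_univ_succ, phi, M2Z] <;>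
      (apply h; decide)

lemma hker3 : LinearMap.ker ((phi M3Z).mulVecLin)
    = coordKer 12 ({3, 4, 5, 6, 7, 8} : Finset (Fin 12)) := by
  ext v
  rw [LinearMap.mem_ker, mem_coordKer, Matrix.mulVecLin_apply]
  constructor
  · intro h
    have h0 := congrFun h 0
    have h1 := congrFun h 1
    have h2 := congrFun h 2
    have h3 := congrFun h 3
    have h4 := congrFun h 4
    have h5 := congrFun h 5
    simp +decide [Matrix.mulVec, dotProduct, Fin.sum_univ_succ, phi, M3Z] at h0 h1 h2 h3 h4 h5
    intro j hj
    fin_cases hj <;> assumption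
  · intro h
    funext i
    fin_cases i <;>
      simp +decide [Matrix.mulVec, dotProduct, Fin.sum_univ_succ, phi, M3Z] <;>
      (apply h; decide)

lemma hker4 : LinearMap.ker ((phi M4Z).mulVecLin)
    = coordKer 12 ({4, 5, 6, 7, 8} : Finset (Fin 12)) := by
  ext v
  rw [LinearMap.mem_ker, mem_coordKer, Matrix.mulVecLin_apply]
  constructor
  · intro h
    have h0 := congrFun h 0
    have h1 := congrFun h 1
    have h2 := congrFun h 2
    have h3 := congrFun h 3
    have h4 := congrFun h 4
    simp +decide [Matrix.mulVec, dotProduct, Fin.sum_univ_succ, phi, M4Z] at h0 h1 h2 h3 h4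
    intro j hj
    fin_cases hj <;> assumption
  · intro h
    funext i
    fin_cases i <;>
      simp +decide [Matrix.mulVec, dotProduct, Fin.sum_univ_succ, phi, M4Z] <;>
      (apply h; decide)

lemma hker5 : LinearMap.ker ((phi M5Z).mulVecLin)
    = coordKer 12 ({5, 6, 7, 8} : Finset (Fin 12)) := by
  ext v
  rw [LinearMap.mem_ker, mem_coordKer, Matrix.mulVecLin_apply]
  constructor
  · intro h
    have h0 := congrFun h 0
    have h1 := congrFun h 1
    have h2 := congrFun h 2
    have h3 := congrFun h 3
    simp +decide [Matrix.mulVec, dotProduct, Fin.sum_univ_succ, phi, M5Z] at h0 h1 h2 h3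
    intro j hj
    fin_cases hj <;> assumption
  · intro h
    funext i
    fin_cases i <;>
      simp +decide [Matrix.mulVec, dotProduct, Fin.sum_univ_succ, phi, M5Z] <;>
      (apply h; decide)

lemma hker6 : LinearMap.ker ((phi M6Z).mulVecLin)
    = coordKer 12 ({6, 7, 8} : Finset (Fin 12)) := by
  ext v
  rw [LinearMap.mem_ker, mem_coordKer, Matrix.mulVecLin_apply]
  constructor
  · intro h
    have h0 := congrFun h 0
    have h1 := congrFun h 1
    have h2 := congrFun h 2
    simp +decide [Matrix.mulVec, dotProduct, Fin.sum_univ_succ, phi, M6Z] at h0 h1 h2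
    intro j hj
    fin_cases hj <;> assumption
  · intro h
    funext i
    fin_cases i <;>
      simp +decide [Matrix.mulVec, dotProduct, Fin.sum_univ_succ, phi, M6Z] <;>
      (apply h; decide)

lemma hker7 : LinearMap.ker ((phi M7Z).mulVecLin)
    = coordKer 12 ({7, 8} : Finset (Fin 12)) := by
  ext v
  rw [LinearMap.mem_ker, mem_coordKer, Matrix.mulVecLin_apply]
  constructor
  · intro h
    have h0 := congrFun h 0
    have h1 := congrFun h 1
    simp +decide [Matrix.mulVec, dotProduct, Fin.sum_univ_succ, phi, M7Z] at h0 h1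
    intro j hj
    fin_cases hj <;> assumption
  · intro h
    funext i
    fin_cases i <;>
      simp +decide [Matrix.mulVec, dotProduct, Fin.sum_univ_succ, phi, M7Z] <;>
      (apply h; decide)

lemma hker8 : LinearMap.ker ((phi M8Z).mulVecLin)
    = coordKer 12 ({8} : Finset (Fin 12)) := by
  ext v
  rw [LinearMap.mem_ker, mem_coordKer, Matrix.mulVecLin_apply]
  constructor
  · intro h
    have h0 := congrFun h 0
    simp +decide [Matrix.mulVec, dotProduct, Fin.sum_univ_succ, phi, M8Z] at h0
    intro j hj
    fin_cases hj <;> assumption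
  · intro h
    funext i
    fin_cases i <;>
      simp +decide [Matrix.mulVec, dotProduct, Fin.sum_univ_succ, phi, M8Z] <;>
      (apply h; decide)

end Stmt12Aux

open Stmt12Aux in
/-- There is a nilpotent matrix `A` over `ℚ` commuting with `B0 = J(4,3,2,2,1)` whose
shape is `(9,2,1)`. -/
theorem stmt_12 :
    ∃ A : Matrix (Fin 12) (Fin 12) ℚ, IsNilpotent A ∧ A * B0 = B0 * A ∧
      hasShape A ({9, 2, 1} : Multiset ℕ) := by
  have hQQi : Qm * Qim = 1 := by
    rw [Qm, Qim, ← map_mul]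
    rw [show QmZ * QimZ = 1 by decide, map_one]
  have hQiQ : Qim * Qm = 1 := by
    rw [Qm, Qim, ← map_mul]
    rw [show QimZ * QmZ = 1 by decide, map_one]
  have hAm : Am = Qm * Cm * Qim := by
    have h1 : Am * Qm = Qm * Cm := by
      rw [Am, Qm, Cm, ← map_mul, ← map_mul]
      exact congrArg _ (by decide)
    calc Am = Am * (Qm * Qim) := by rw [hQQi, mul_one]
    _ = (Am * Qm) * Qim := by rw [mul_assoc]
    _ = Qm * Cm * Qim := by rw [h1]
  have hAeq : ∀ k : ℕ, Am ^ k = Qm * Cm ^ k * Qim := by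
    intro k
    induction k with
    | zero => simp [hQQi]
    | succ n ih =>
      rw [pow_succ, ih, hAm, pow_succ]
      simp only [mul_assoc]
      rw [← mul_assoc Qim Qm, hQiQ, one_mul]
  have hC9 : Cm ^ 9 = 0 := by
    rw [Cm, ← map_pow, show CmZ ^ 9 = 0 by decide, map_zero]
  have hfg : Qim.mulVecLin ∘ₗ Qm.mulVecLin = LinearMap.id := by
    rw [← Matrix.mulVecLin_mul, hQiQ, Matrix.mulVecLin_one]
  have hgf : Qm.mulVecLin ∘ₗ Qim.mulVecLin = LinearMap.id := by
    rw [← Matrix.mulVecLin_mul, hQQi, Matrix.mulVecLin_one]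
  have hinj : LinearMap.ker Qm.mulVecLin = ⊥ := by
    have h := LinearMap.ker_le_ker_comp Qm.mulVecLin Qim.mulVecLin
    rw [hfg, LinearMap.ker_id] at h
    exact le_bot_iff.mp h
  have hdim : ∀ k : ℕ,
      Module.finrank ℚ (LinearMap.ker ((Am ^ k).mulVecLin))
        = Module.finrank ℚ (LinearMap.ker ((Cm ^ k).mulVecLin)) := by
    intro k
    rw [hAeq k, Matrix.mulVecLin_mul, LinearMap.ker_comp, Matrix.mulVecLin_mul,
      LinearMap.ker_comp, hinj, Submodule.comap_bot]
    set e : (Fin 12 → ℚ) ≃ₗ[ℚ] (Fin 12 → ℚ) :=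
      LinearEquiv.ofLinear Qim.mulVecLin Qm.mulVecLin hfg hgf with he
    have hcomap : Submodule.comap Qim.mulVecLin (LinearMap.ker (Cm ^ k).mulVecLin)
        = Submodule.map (e.symm : (Fin 12 → ℚ) →ₗ[ℚ] (Fin 12 → ℚ))
            (LinearMap.ker (Cm ^ k).mulVecLin) := by
      rw [← Submodule.comap_equiv_eq_map_symm]
      rfl
    rw [hcomap]
    exact LinearEquiv.finrank_map_eq _ _
  refine ⟨Am, ⟨9, by rw [hAeq 9, hC9, mul_zero, zero_mul]⟩, ?_, ?_, ?_, ?_⟩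
  · -- commutes with B0
    have hB0 : B0 = phi B0Z := by
      ext i j
      simp [B0, B0Z, phi, RingHom.mapMatrix_apply, Matrix.map_apply,
        apply_ite (Int.cast : ℤ → ℚ)]
    rw [hB0, Am, ← map_mul, ← map_mul]
    exact congrArg _ (by decide)
  · -- positivity of parts
    intro i hi
    simp only [Multiset.insert_eq_cons, Multiset.mem_cons, Multiset.mem_singleton] at hi
    rcases hi with h | h | h <;> omega
  · -- sum of parts
    decide
  · -- kernel dimensions
    intro k
    rw [hdim k]
    rcases Nat.lt_or_ge k 9 with hk | hk
    · interval_cases k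
      · -- k = 0
        have hCk : Cm ^ 0 = phi M0Z := by
          rw [Cm, ← map_pow]
          exact congrArg _ (by decide)
        rw [hCk, hker0, finrank_coordKer]
        decide
      · -- k = 1
        have hCk : Cm ^ 1 = phi M1Z := by
          rw [Cm, ← map_pow]
          exact congrArg _ (by decide)
        rw [hCk, hker1, finrank_coordKer]
        decide
      · -- k = 2
        have hCk : Cm ^ 2 = phi M2Z := by
          rw [Cm, ← map_pow]
          exact congrArg _ (by decide)
        rw [hCk, hker2, finrank_coordKer]
        decide
      · -- k = 3
        have hCk : Cm ^ 3 = phi M3Z := by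
          rw [Cm, ← map_pow]
          exact congrArg _ (by decide)
        rw [hCk, hker3, finrank_coordKer]
        decide
      · -- k = 4
        have hCk : Cm ^ 4 = phi M4Z := by
          rw [Cm, ← map_pow]
          exact congrArg _ (by decide)
        rw [hCk, hker4, finrank_coordKer]
        decide
      · -- k = 5
        have hCk : Cm ^ 5 = phi M5Z := by
          rw [Cm, ← map_pow]
          exact congrArg _ (by decide)
        rw [hCk, hker5, finrank_coordKer]
        decide
      · -- k = 6
        have hCk : Cm ^ 6 = phi M6Z := by
          rw [Cm, ← map_pow]
          exact congrArg _ (by decide)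
        rw [hCk, hker6, finrank_coordKer]
        decide
      · -- k = 7
        have hCk : Cm ^ 7 = phi M7Z := by
          rw [Cm, ← map_pow]
          exact congrArg _ (by decide)
        rw [hCk, hker7, finrank_coordKer]
        decide
      · -- k = 8
        have hCk : Cm ^ 8 = phi M8Z := by
          rw [Cm, ← map_pow]
          exact congrArg _ (by decide)
        rw [hCk, hker8, finrank_coordKer]
        decide
    · -- k ≥ 9
      have h0 : Cm ^ k = 0 := by
        calc Cm ^ k = Cm ^ 9 * Cm ^ (k - 9) := by rw [← pow_add]; congr 1; omega
        _ = 0 := by rw [hC9, zero_mul]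
      rw [h0, Matrix.mulVecLin_zero, LinearMap.ker_zero, finrank_top]
      simp only [Multiset.insert_eq_cons, Multiset.map_cons, Multiset.map_singleton,
        Multiset.sum_cons, Multiset.sum_singleton]
      have h12 : Module.finrank ℚ (Fin 12 → ℚ) = 12 := by
        rw [Module.finrank_pi]; exact Fintype.card_fin 12
      rw [h12]
      omega
end
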